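/- arXiv:2410.04577 — 3 statements merged into one kernel-verified Lean document; each statement's English description precedes it below -/
import Mathlib

section
/- Let D ≥ 1 and a, x : Fin D → ℝ, and let L(z) = ∑_{d} |z/D - a d * x d|. Define the IRLS iteration: given z_k with a d * x d ≠ z_k / D for all d, set w d = 1/|a d * x d - z_k/D| and z_{k+1} = D * (∑_d w d * a d * x d)/(∑_d w d). Then L(z_{k+1}) ≤ L(z_k). -/
theorem irls_descent (D : ℕ) (hD : 1 ≤ D) (a x : Fin D → ℝ)
    (L : ℝ → ℝ) (hL : L = fun z => ∑ d, |z / D - a d * x d|)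
    (zk : ℝ) (hzk : ∀ d, a d * x d ≠ zk / D)
    (w : Fin D → ℝ) (hw : w = fun d => 1 / |a d * x d - zk / D|)
    (zk1 : ℝ) (hz1 : zk1 = D * (∑ d, w d * (a d * x d)) / (∑ d, w d)) :
    L zk1 ≤ L zk := by
  set c : Fin D → ℝ := fun d => a d * x d with hc
  have hDpos : (0:ℝ) < D := by exact_mod_cast hD
  -- weights are positive
  have habs : ∀ d, 0 < |zk / D - c d| := by
    intro d
    rw [abs_pos, sub_ne_zero]
    exact fun h => hzk d h.symm
  have hwd : ∀ d, w d = 1 / |zk / D - c d| := by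
    intro d; rw [hw]; simp only [abs_sub_comm]; rfl
  have hwpos : ∀ d, 0 < w d := by
    intro d; rw [hwd d]; exact div_pos one_pos (habs d)
  -- w d * (zk/D - c d)^2 = |zk/D - c d|
  have hwr0 : ∀ d, w d * (zk / D - c d) ^ 2 = |zk / D - c d| := by
    intro d
    rw [hwd d, one_div, inv_mul_eq_div, ← sq_abs, sq, mul_div_assoc,
      div_self (habs d).ne', mul_one]
  -- pointwise majorization
  have hmaj : ∀ t : ℝ, ∀ d, |t - c d| ≤ w d * (t - c d) ^ 2 / 2 + |zk / D - c d| / 2 := by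
    intro t d
    have h0 := habs d
    rw [hwd d]
    have h1 : |t - c d| ^ 2 = (t - c d) ^ 2 := sq_abs _
    have h2 := sq_nonneg (|t - c d| - |zk / D - c d|)
    have h3 : 0 ≤ |t - c d| := abs_nonneg _
    rw [div_mul_eq_mul_div, one_mul, div_div]
    rw [div_add_div _ _ (by positivity) (by norm_num), le_div_iff₀ (by positivity)]
    nlinarith
  -- sum of weighted squares identity
  set S : ℝ := ∑ d, w d with hS
  set M : ℝ := ∑ d, w d * c d with hM
  have hSpos : 0 < S := Finset.sum_pos (fun d _ => hwpos d)
    (Finset.univ_nonempty_iff.mpr ⟨⟨0, hD⟩⟩)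
  have hquad : ∀ t : ℝ, ∑ d, w d * (t - c d) ^ 2
      = S * t ^ 2 - 2 * t * M + ∑ d, w d * c d ^ 2 := by
    intro t
    have : ∀ d : Fin D, w d * (t - c d) ^ 2
        = w d * t ^ 2 - 2 * t * (w d * c d) + w d * c d ^ 2 := by intro d; ring
    rw [Finset.sum_congr rfl (fun d _ => this d)]
    rw [Finset.sum_add_distrib, Finset.sum_sub_distrib, ← Finset.sum_mul,
      ← Finset.mul_sum]
    try ring
  -- zk1 / D = M / S
  have ht1 : zk1 / D = M / S := by
    rw [hz1]
    field_simp
  -- weighted least squares: zk1/D minimizes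
  have hls : ∑ d, w d * (zk1 / D - c d) ^ 2 ≤ ∑ d, w d * (zk / D - c d) ^ 2 := by
    rw [hquad, hquad, ht1]
    have h := sq_nonneg (zk / D - M / S)
    have hMS : M / S * S = M := div_mul_cancel₀ _ (ne_of_gt hSpos)
    nlinarith [mul_nonneg hSpos.le h, hMS, sq_nonneg (zk / D * S - M)]
  -- put it together
  have hLzk : L zk = ∑ d, w d * (zk / D - c d) ^ 2 := by
    rw [hL]
    exact Finset.sum_congr rfl (fun d _ => (hwr0 d).symm)
  rw [hL]
  calc ∑ d, |zk1 / D - c d|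
      ≤ ∑ d, (w d * (zk1 / D - c d) ^ 2 / 2 + |zk / D - c d| / 2) :=
        Finset.sum_le_sum (fun d _ => hmaj (zk1 / D) d)
    _ = (∑ d, w d * (zk1 / D - c d) ^ 2) / 2 + (∑ d, |zk / D - c d|) / 2 := by
        rw [Finset.sum_add_distrib, Finset.sum_div, Finset.sum_div]
    _ ≤ (∑ d, w d * (zk / D - c d) ^ 2) / 2 + (∑ d, |zk / D - c d|) / 2 := by
        gcongr
    _ = ∑ d, |zk / D - c d| := by
        rw [Finset.sum_congr rfl (fun d _ => hwr0 d)]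
        ring
end

section
/- Let D ≥ 1, v : Fin D → ℝ (values v d = a d * x d), w : Fin D → ℝ with w d > 0, and let z = (∑_d w d * v d)/(∑_d w d) be the weighted mean. For w₀ > 0 and x₀ ∈ ℝ, define the contaminated weighted mean z_ε = ((1-ε)∑_d w d * v d + ε w₀ x₀) / ((1-ε)∑_d w d + ε w₀). Then lim_{ε→0} (z_ε - z)/ε = w₀ (x₀ - z) / (∑_d w d). -/
theorem influence_function_weighted_mean (D : ℕ) (hD : 1 ≤ D) (v w : Fin D → ℝ)
    (hw : ∀ d, 0 < w d)
    (z : ℝ) (hz : z = (∑ d, w d * v d) / (∑ d, w d))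
    (w₀ : ℝ) (hw₀ : 0 < w₀) (x₀ : ℝ) :
    Filter.Tendsto
      (fun ε : ℝ =>
        (((1 - ε) * (∑ d, w d * v d) + ε * w₀ * x₀)
            / ((1 - ε) * (∑ d, w d) + ε * w₀) - z) / ε)
      (nhdsWithin 0 {0}ᶜ) (nhds (w₀ * (x₀ - z) / (∑ d, w d))) := by
  have hne : Nonempty (Fin D) := ⟨⟨0, hD⟩⟩
  set N := ∑ d, w d * v d with hN
  set S := ∑ d, w d with hS
  have hSpos : 0 < S := Finset.sum_pos (fun d _ => hw d) Finset.univ_nonempty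
  have h1 : HasDerivAt (fun ε : ℝ => (1 - ε) * N + ε * w₀ * x₀) (-N + w₀ * x₀) 0 := by
    have := (((hasDerivAt_id (0:ℝ)).const_sub 1).mul_const N).add
      (((hasDerivAt_id (0:ℝ)).mul_const w₀).mul_const x₀)
    simp at this; exact this
  have h2 : HasDerivAt (fun ε : ℝ => (1 - ε) * S + ε * w₀) (-S + w₀) 0 := by
    have := (((hasDerivAt_id (0:ℝ)).const_sub 1).mul_const S).add
      ((hasDerivAt_id (0:ℝ)).mul_const w₀)
    simp at this; exact this
  have hden : (1 - (0:ℝ)) * S + 0 * w₀ ≠ 0 := by simp; linarith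
  have hf := h1.div h2 hden
  have hf' : HasDerivAt (fun ε : ℝ => ((1 - ε) * N + ε * w₀ * x₀) / ((1 - ε) * S + ε * w₀))
      (w₀ * (x₀ - z) / S) 0 := by
    refine hf.congr_deriv ?_
    rw [hz]
    field_simp
    ring
  have := hasDerivAt_iff_tendsto_slope.mp hf'
  refine this.congr' ?_
  filter_upwards [self_mem_nhdsWithin] with ε hε
  simp only [slope_def_field, div_sub_div_same]
  rw [hz]
  simp [div_sub_div_same, sub_zero]
end

section
/- Let D ≥ 1, v : Fin D → ℝ, and define the IRLS sequence z_{k+1} = D (∑_d w_d^{(k)} v d)/(∑_d w_d^{(k)}) with w_d^{(k)} = 1/|v d - z_k/D|, assuming z_k/D ≠ v d for all k, d. Then the sequence L(z_k), where L(z) = ∑_d |z/D - v d|, is nonincreasing and converges (being bounded below by 0). -/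
theorem irls_objective_converges (D : ℕ) (hD : 1 ≤ D) (v : Fin D → ℝ)
    (L : ℝ → ℝ) (hL : L = fun z => ∑ d, |z / D - v d|)
    (z : ℕ → ℝ) (hz : ∀ k, ∀ d, v d ≠ z k / D)
    (hrec : ∀ k, z (k + 1)
      = D * (∑ d, (1 / |v d - z k / D|) * v d) / (∑ d, 1 / |v d - z k / D|)) :
    (∀ k, L (z (k + 1)) ≤ L (z k)) ∧
      ∃ l : ℝ, Filter.Tendsto (fun k => L (z k)) Filter.atTop (nhds l) := by
  have hD0 : (D : ℝ) ≠ 0 := by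
    exact_mod_cast Nat.pos_of_ne_zero (by omega) |>.ne'
  have hne : (Finset.univ : Finset (Fin D)).Nonempty := by
    have : Nonempty (Fin D) := Fin.pos_iff_nonempty.mp (by omega)
    exact Finset.univ_nonempty
  have descent : ∀ k, L (z (k + 1)) ≤ L (z k) := by
    intro k
    set x := z k / D with hx
    set w : Fin D → ℝ := fun d => 1 / |v d - x| with hw
    have habs : ∀ d, 0 < |v d - x| := fun d =>
      abs_pos.mpr (sub_ne_zero.mpr (hz k d))
    have hwpos : ∀ d, 0 < w d := fun d => one_div_pos.mpr (habs d)
    have hW : 0 < ∑ d, w d := Finset.sum_pos (fun d _ => hwpos d) hne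
    have hy : z (k + 1) / D = (∑ d, w d * v d) / (∑ d, w d) := by
      rw [hrec k, mul_div_assoc, mul_div_cancel_left₀ _ hD0]
    set y := z (k + 1) / D with hyy
    clear_value y
    clear_value x
    have hS : ∑ d, w d * v d = y * ∑ d, w d := by
      rw [hy, div_mul_cancel₀ _ hW.ne']
    -- Q(x) = L(z k)
    have hQx : ∑ d, w d * (v d - x) ^ 2 = ∑ d, |x - v d| := by
      apply Finset.sum_congr rfl
      intro d _
      calc w d * (v d - x) ^ 2 = |v d - x|⁻¹ * |v d - x| ^ 2 := by
            simp only [hw, one_div, sq_abs]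
        _ = |v d - x| := by rw [sq, inv_mul_cancel_left₀ (habs d).ne']
        _ = |x - v d| := abs_sub_comm _ _
    -- Q(y) ≤ Q(x)
    have hQ : ∑ d, w d * (v d - y) ^ 2 ≤ ∑ d, w d * (v d - x) ^ 2 := by
      have hdiff : ∑ d, w d * (v d - x) ^ 2 - ∑ d, w d * (v d - y) ^ 2
          = (∑ d, w d) * (y - x) ^ 2 := by
        have h1 : ∑ d, (w d * (v d - x) ^ 2 - w d * (v d - y) ^ 2)
            = (y - x) * 2 * (∑ d, w d * v d) - (y - x) * (x + y) * (∑ d, w d) := by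
          rw [Finset.mul_sum, Finset.mul_sum, ← Finset.sum_sub_distrib]
          apply Finset.sum_congr rfl
          intro d _
          ring
        rw [← Finset.sum_sub_distrib, h1, hS]
        ring
      nlinarith [mul_nonneg hW.le (sq_nonneg (y - x))]
    -- pointwise majorization
    have key : ∀ d ∈ Finset.univ,
        |y - v d| ≤ w d * (v d - y) ^ 2 / 2 + |x - v d| / 2 := by
      intro d _
      have hb := habs d
      have hrw : w d * (v d - y) ^ 2 / 2 + |x - v d| / 2
          = ((v d - y) ^ 2 + (v d - x) ^ 2) / (2 * |v d - x|) := by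
        simp only [hw, abs_sub_comm x (v d)]
        field_simp
        linear_combination sq_abs (v d - x)
      rw [hrw, le_div_iff₀ (by positivity), abs_sub_comm]
      nlinarith [sq_nonneg (|v d - y| - |v d - x|), sq_abs (v d - y), sq_abs (v d - x)]
    have hsum : ∑ d, |y - v d| ≤ (∑ d, w d * (v d - y) ^ 2) / 2 + (∑ d, |x - v d|) / 2 := by
      calc ∑ d, |y - v d| ≤ ∑ d, (w d * (v d - y) ^ 2 / 2 + |x - v d| / 2) :=
            Finset.sum_le_sum key
        _ = (∑ d, w d * (v d - y) ^ 2) / 2 + (∑ d, |x - v d|) / 2 := by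
            rw [Finset.sum_add_distrib, ← Finset.sum_div, ← Finset.sum_div]
    rw [hL]
    simp only
    have hLk : ∑ d, |z k / D - v d| = ∑ d, |x - v d| := by rw [← hx]
    have hLk1 : ∑ d, |z (k + 1) / D - v d| = ∑ d, |y - v d| := by rw [← hyy]
    rw [hLk, hLk1]
    linarith [hQx ▸ hQ]
  refine ⟨descent, ?_⟩
  have hanti : Antitone (fun k => L (z k)) :=
    antitone_nat_of_succ_le descent
  have hbdd : BddBelow (Set.range fun k => L (z k)) := by
    refine ⟨0, ?_⟩
    rintro _ ⟨k, rfl⟩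
    rw [hL]
    exact Finset.sum_nonneg fun d _ => abs_nonneg _
  exact ⟨_, tendsto_atTop_ciInf hanti hbdd⟩
end
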